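/- arXiv:1506.03773 — 2 statements merged into one kernel-verified Lean document; each statement's English description precedes it below -/
import Mathlib

section
/- Almost surely there exists a random constant C > 0 such that for every ξ = u(cos θ, sin θ) ∈ ℝ² ∖ {0} with θ ∈ H_u, one has |∫_T^1 Z_t dt| ≤ C |ξ|^{-1/2}, where T = T_ω(ξ) is the associated random time. -/
noncomputable section

open MeasureTheory ProbabilityTheory Real Filter Set intervalIntegral
open scoped Topology

/-- The threshold angle `θ_u = min{u^{-1/2}, π/4}`. -/
def thetaU (u : ℝ) : ℝ := min (u ^ (-(1 : ℝ) / 2)) (π / 4)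

/-- The horizontal angles `H_u = [0, θ_u] ∪ [π − θ_u, π + θ_u] ∪ [2π − θ_u, 2π)`. -/
def Hset (u : ℝ) : Set ℝ :=
  Icc 0 (thetaU u) ∪ Icc (π - thetaU u) (π + thetaU u) ∪ Ico (2 * π - thetaU u) (2 * π)

/-- The Itô drift-diffusion process `X_t = −2πu(t cos θ + W_t sin θ)`. -/
def Xproc {Ω : Type*} (W : ℝ → Ω → ℝ) (u θ : ℝ) (ω : Ω) (t : ℝ) : ℝ :=
  -(2 * π * u) * (t * Real.cos θ + W t ω * Real.sin θ)

/-- The target value `−2π⌈u(cos θ + W₁ sin θ)⌉` if `X₁ ≥ 0`, and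
`−2π⌊u(cos θ + W₁ sin θ)⌋` if `X₁ < 0`. -/
def targ {Ω : Type*} (W : ℝ → Ω → ℝ) (u θ : ℝ) (ω : Ω) : ℝ :=
  if 0 ≤ Xproc W u θ ω 1
  then -(2 * π) * (⌈u * (Real.cos θ + W 1 ω * Real.sin θ)⌉ : ℝ)
  else -(2 * π) * (⌊u * (Real.cos θ + W 1 ω * Real.sin θ)⌋ : ℝ)

/-- The random time `T = T_ω(ξ)`: the minimal `t ∈ [0,1]` with `X_t` equal to the
target value (realised as an infimum, which is attained for a.e. `ω` by continuity). -/
def Ttime {Ω : Type*} (W : ℝ → Ω → ℝ) (u θ : ℝ) (ω : Ω) : ℝ :=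
  sInf {t | t ∈ Icc (0 : ℝ) 1 ∧ Xproc W u θ ω t = targ W u θ ω}


/-! The estimate holds path by path. Since `|Z_t| = 1`, the integral
is at most `1 - T`. Writing `M` for a bound of `|W|` on `[0,1]`,
`X_1 - X_T = -2πu((1 - T) cos θ + (W_1 - W_T) sin θ)`, where `X_T` is the target value, which lies
within `2π` of `X_1`. On the horizontal angles `|cos θ| ≥ 1/2` and `u |sin θ| ≤ u θ_u ≤ √u`, so
`u (1 - T) ≤ 2 + 4M√u`, that is `1 - T ≤ (2 + 4M) u^{-1/2}` (trivially so when `u < 1`). -/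

lemma exists_abs_sub_int_mul_pi_le_of_mem_Hset {u θ : ℝ} (hθ : θ ∈ Hset u) :
    ∃ k : ℤ, |θ - k * π| ≤ thetaU u := by
  rcases hθ with (⟨h₀, h₁⟩ | ⟨h₀, h₁⟩) | ⟨h₀, h₁⟩
  · exact ⟨0, abs_le.2 ⟨by push_cast; linarith, by push_cast; linarith⟩⟩
  · exact ⟨1, abs_le.2 ⟨by push_cast; linarith, by push_cast; linarith⟩⟩
  · exact ⟨2, abs_le.2 ⟨by push_cast; linarith, by push_cast; linarith⟩⟩

lemma abs_sin_le_thetaU_of_mem_Hset {u θ : ℝ} (hθ : θ ∈ Hset u) : |sin θ| ≤ thetaU u := by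
  obtain ⟨k, hk⟩ := exists_abs_sub_int_mul_pi_le_of_mem_Hset hθ
  calc |sin θ| = |sin (θ - k * π)| := by
        rw [sin_sub_int_mul_pi, abs_mul, abs_neg_one_zpow, one_mul]
    _ ≤ |θ - k * π| := abs_sin_le_abs
    _ ≤ thetaU u := hk

lemma half_le_abs_cos_of_mem_Hset {u θ : ℝ} (hθ : θ ∈ Hset u) : 1 / 2 ≤ |cos θ| := by
  obtain ⟨k, hk⟩ := exists_abs_sub_int_mul_pi_le_of_mem_Hset hθ
  have hk' : |θ - k * π| ≤ π / 4 := hk.trans (min_le_right _ _)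
  calc (1 : ℝ) / 2 ≤ cos (π / 4) := by rw [cos_pi_div_four]; linarith [one_lt_sqrt_two]
    _ ≤ cos |θ - k * π| :=
      cos_le_cos_of_nonneg_of_le_pi (abs_nonneg _) (by linarith [pi_pos]) hk'
    _ = cos (θ - k * π) := cos_abs _
    _ ≤ |cos (θ - k * π)| := le_abs_self _
    _ = |cos θ| := by rw [cos_sub_int_mul_pi, abs_mul, abs_neg_one_zpow, one_mul]

lemma rpow_neg_half_eq_inv_sqrt {u : ℝ} (hu : 0 ≤ u) : u ^ (-(1 : ℝ) / 2) = (√u)⁻¹ := by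
  rw [neg_div, rpow_neg hu, sqrt_eq_rpow]

lemma mul_thetaU_le_sqrt {u : ℝ} (hu : 0 < u) : u * thetaU u ≤ √u := by
  calc u * thetaU u ≤ u * u ^ (-(1 : ℝ) / 2) := mul_le_mul_of_nonneg_left (min_le_left _ _) hu.le
    _ = √u := by
      rw [rpow_neg_half_eq_inv_sqrt hu.le, ← div_eq_mul_inv, div_sqrt]

section Hitting

variable {α δ : Type*} [ConditionallyCompleteLinearOrder α] [TopologicalSpace α] [OrderTopology α]
  [DenselyOrdered α] [LinearOrder δ] [TopologicalSpace δ] [OrderClosedTopology δ]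

lemma ContinuousOn.csInf_hittingSet_mem {f : α → δ} {a b : α} {c : δ} (hab : a ≤ b)
    (hf : ContinuousOn f (Icc a b)) (hc : c ∈ uIcc (f a) (f b)) :
    sInf {t | t ∈ Icc a b ∧ f t = c} ∈ {t | t ∈ Icc a b ∧ f t = c} := by
  have hne : {t | t ∈ Icc a b ∧ f t = c}.Nonempty := by
    rw [← uIcc_of_le hab] at hf
    obtain ⟨t, ht, hft⟩ := intermediate_value_uIcc hf hc
    exact ⟨t, by rwa [uIcc_of_le hab] at ht, hft⟩
  have hclosed : IsClosed {t | t ∈ Icc a b ∧ f t = c} :=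
    hf.preimage_isClosed_of_isClosed isClosed_Icc isClosed_singleton
  exact hclosed.csInf_mem hne ⟨a, fun t ht => ht.1.1⟩

end Hitting

lemma norm_intervalIntegral_exp_I_mul_ofReal_le (f : ℝ → ℝ) (a b : ℝ) :
    ‖∫ t in a..b, Complex.exp (Complex.I * (f t : ℂ))‖ ≤ |b - a| := by
  simpa using norm_integral_le_of_norm_le_const (a := a) (b := b) (C := 1)
    fun t _ => (Complex.norm_exp_I_mul_ofReal (f t)).le

section SamplePath

variable {Ω : Type*} {W : ℝ → Ω → ℝ} {u θ : ℝ} {ω : Ω}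

lemma Xproc_zero (hW0 : W 0 ω = 0) : Xproc W u θ ω 0 = 0 := by
  simp [Xproc, hW0]

lemma Xproc_one : Xproc W u θ ω 1 = -(2 * π) * (u * (cos θ + W 1 ω * sin θ)) := by
  rw [Xproc]; ring

lemma continuousOn_Xproc {s : Set ℝ} (hW : ContinuousOn (W · ω) s) :
    ContinuousOn (Xproc W u θ ω) s := by
  unfold Xproc; fun_prop

lemma targ_mem_uIcc_zero_Xproc_one : targ W u θ ω ∈ uIcc 0 (Xproc W u θ ω 1) := by
  have hπ := pi_pos
  rw [targ, Xproc_one]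
  set v := u * (cos θ + W 1 ω * sin θ)
  split_ifs with h
  · have hv : v ≤ 0 := by nlinarith
    have hceil : (⌈v⌉ : ℝ) ≤ 0 := by exact_mod_cast Int.ceil_le.2 (by exact_mod_cast hv)
    exact mem_uIcc_of_le (by nlinarith) (by nlinarith [Int.le_ceil v])
  · have hv : 0 ≤ v := by nlinarith
    have hfloor : (0 : ℝ) ≤ ⌊v⌋ := by exact_mod_cast Int.floor_nonneg.2 hv
    exact mem_uIcc_of_ge (by nlinarith [Int.floor_le v]) (by nlinarith)

lemma abs_Xproc_one_sub_targ_le : |Xproc W u θ ω 1 - targ W u θ ω| ≤ 2 * π := by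
  have hπ := pi_pos
  rw [targ, Xproc_one]
  set v := u * (cos θ + W 1 ω * sin θ)
  split_ifs
  · rw [abs_le]
    constructor <;> nlinarith [Int.le_ceil v, Int.ceil_lt_add_one v]
  · rw [abs_le]
    constructor <;> nlinarith [Int.floor_le v, Int.sub_one_lt_floor v]

lemma Ttime_mem (hW0 : W 0 ω = 0) (hW : ContinuousOn (W · ω) (Icc 0 1)) :
    Ttime W u θ ω ∈ Icc 0 1 ∧ Xproc W u θ ω (Ttime W u θ ω) = targ W u θ ω :=
  (continuousOn_Xproc hW).csInf_hittingSet_mem zero_le_one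
    (by rw [Xproc_zero hW0]; exact targ_mem_uIcc_zero_Xproc_one)

lemma mul_one_sub_le_of_Xproc_eq_targ {M t : ℝ} (hu : 0 < u) (hθ : θ ∈ Hset u)
    (hM : ∀ s ∈ Icc (0 : ℝ) 1, |W s ω| ≤ M) (ht : t ∈ Icc (0 : ℝ) 1)
    (hXt : Xproc W u θ ω t = targ W u θ ω) :
    u * (1 - t) ≤ 2 + 4 * M * √u := by
  have hπ := pi_pos
  have hdrift : u * cos θ * (1 - t) =
      (targ W u θ ω - Xproc W u θ ω 1) / (2 * π) - u * sin θ * (W 1 ω - W t ω) := by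
    rw [← hXt, Xproc, Xproc]; field_simp; ring
  have hcos : u * (1 / 2) * (1 - t) ≤ |u * cos θ * (1 - t)| := by
    rw [abs_mul, abs_mul, abs_of_pos hu, abs_of_nonneg (sub_nonneg.2 ht.2)]
    exact mul_le_mul_of_nonneg_right
      (mul_le_mul_of_nonneg_left (half_le_abs_cos_of_mem_Hset hθ) hu.le) (sub_nonneg.2 ht.2)
  have hsin : |u * sin θ| ≤ √u := by
    rw [abs_mul, abs_of_pos hu]
    exact (mul_le_mul_of_nonneg_left (abs_sin_le_thetaU_of_mem_Hset hθ) hu.le).trans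
      (mul_thetaU_le_sqrt hu)
  have htarg : |(targ W u θ ω - Xproc W u θ ω 1) / (2 * π)| ≤ 1 := by
    rw [abs_div, abs_sub_comm, abs_of_pos (by positivity : (0 : ℝ) < 2 * π),
      div_le_one (by positivity)]
    exact abs_Xproc_one_sub_targ_le
  have hW : |W 1 ω - W t ω| ≤ 2 * M := by
    linarith [abs_sub (W 1 ω) (W t ω), hM 1 (right_mem_Icc.2 zero_le_one), hM t ht]
  have hprod : |u * sin θ * (W 1 ω - W t ω)| ≤ √u * (2 * M) := by
    rw [abs_mul]; exact mul_le_mul hsin hW (abs_nonneg _) (sqrt_nonneg _)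
  have hbound : |u * cos θ * (1 - t)| ≤ 1 + √u * (2 * M) := by
    rw [hdrift]; exact (abs_sub _ _).trans (add_le_add htarg hprod)
  linarith

end SamplePath

lemma le_mul_rpow_neg_half_of_mul_le {u x M : ℝ} (hu : 0 < u) (hM : 0 ≤ M) (hx₀ : 0 ≤ x)
    (hx₁ : x ≤ 1) (h : u * x ≤ 2 + 4 * M * √u) : x ≤ (2 + 4 * M) * u ^ (-(1 : ℝ) / 2) := by
  have hs := sqrt_pos.2 hu
  rw [rpow_neg_half_eq_inv_sqrt hu.le, ← div_eq_mul_inv, le_div_iff₀ hs]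
  have hu' := mul_self_sqrt hu.le
  rcases le_total 1 √u with h1 | h1
  · refine le_of_mul_le_mul_left ?_ hs
    nlinarith
  · nlinarith

theorem stmt9_general {Ω : Type*} [MeasurableSpace Ω] (P : Measure Ω)
    (W : ℝ → Ω → ℝ)
    (hW0 : ∀ ω, W 0 ω = 0)
    (hWcont : ∀ᵐ ω ∂P, ContinuousOn (fun t => W t ω) (Set.Ici 0)) :
    ∀ᵐ ω ∂P, ∃ C : ℝ, 0 < C ∧ ∀ u θ : ℝ, 0 < u → θ ∈ Hset u →
      ‖∫ t in (Ttime W u θ ω)..1, Complex.exp (Complex.I * (Xproc W u θ ω t : ℂ))‖ ≤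
        C * u ^ (-(1 : ℝ) / 2) := by
  filter_upwards [hWcont] with ω hcont
  have hW : ContinuousOn (W · ω) (Icc 0 1) := hcont.mono Icc_subset_Ici_self
  obtain ⟨M, hM⟩ := isCompact_Icc.exists_bound_of_continuousOn hW
  simp only [Real.norm_eq_abs] at hM
  have hM₀ : 0 ≤ M := (abs_nonneg _).trans (hM 0 (left_mem_Icc.2 zero_le_one))
  refine ⟨2 + 4 * M, by positivity, fun u θ hu hθ => ?_⟩
  obtain ⟨hT, hXT⟩ := Ttime_mem (u := u) (θ := θ) (hW0 ω) hW
  have hT₁ : 0 ≤ 1 - Ttime W u θ ω := sub_nonneg.2 hT.2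
  calc _ ≤ |1 - Ttime W u θ ω| := norm_intervalIntegral_exp_I_mul_ofReal_le _ _ _
    _ = 1 - Ttime W u θ ω := abs_of_nonneg hT₁
    _ ≤ _ := le_mul_rpow_neg_half_of_mul_le hu hM₀ hT₁ (by linarith [hT.1])
        (mul_one_sub_le_of_Xproc_eq_targ hu hθ hM hT hXT)

/-- Almost surely there is a random constant `C > 0` such that for every
`ξ = u(cos θ, sin θ) ∈ ℝ² ∖ {0}` with `θ ∈ H_u` one has `|∫_T^1 Z_t dt| ≤ C|ξ|^{-1/2}`,
where `Z_t = exp(i X_t)` and `T = T_ω(ξ)`. -/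
theorem stmt9 {Ω : Type*} [MeasurableSpace Ω] (P : Measure Ω) [IsProbabilityMeasure P]
    (W : ℝ → Ω → ℝ)
    (hW0 : ∀ ω, W 0 ω = 0)
    (hWmeas : ∀ t, Measurable (W t))
    (hWcont : ∀ᵐ ω ∂P, ContinuousOn (fun t => W t ω) (Set.Ici 0))
    (hWindep : ∀ (n : ℕ) (t : Fin (n + 1) → ℝ), Monotone t → (∀ i, 0 ≤ t i) →
      iIndepFun
        (fun i : Fin n => fun ω => W (t i.succ) ω - W (t i.castSucc) ω) P)
    (hWgauss : ∀ s t : ℝ, 0 ≤ s → s ≤ t →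
      Measure.map (fun ω => W t ω - W s ω) P = gaussianReal 0 (Real.toNNReal (t - s))) :
    ∀ᵐ ω ∂P, ∃ C : ℝ, 0 < C ∧ ∀ u θ : ℝ, 0 < u → θ ∈ Hset u →
      ‖∫ t in (Ttime W u θ ω)..1, Complex.exp (Complex.I * (Xproc W u θ ω t : ℂ))‖ ≤
        C * u ^ (-(1 : ℝ) / 2) :=
  stmt9_general P W hW0 hWcont
end
end

section
/- Let (r_N)_{N∈ℕ} be a sequence of positive reals such that Σ_{N=1}^∞ r_N/N < ∞. Then there exists a strictly increasing sequence of indices N_j → ∞ such that Σ_{j=1}^∞ r_{N_j} < ∞ and N_{j+1}/N_j → 1 as j → ∞. -/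
/-!
Let `t n` be the tail `∑_{k ≥ n} r (k + 1) / (k + 1)`. The weight `ω n = (√(t n))⁻¹` tends to
infinity, yet `∑ ω n · r (n + 1) / (n + 1)` still converges, since
`(t n - t (n + 1)) / √(t n) ≤ 2 (√(t n) - √(t (n + 1)))` telescopes.

Cut `ℕ` into blocks `[a j, a (j + 1))` with `a (j + 1) = a j + ⌈a j / ω (a j)⌉`, so that
`a (j + 1) / a j → 1`, and let `N j` minimise `r` on block `j`. A minimum is at most the mean, so
`r (N j) ≤ a (j + 1) / (a (j + 1) - a j) · ∑_{block} r M / M ≤ ∑_{block} (ω M + 1) · r M / M`, and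
these block sums are summable. Finally `a j ≤ N j < a (j + 1)` gives
`1 ≤ N (j + 1) / N j ≤ a (j + 2) / a j → 1`.
-/

noncomputable section

open Filter Finset
open scoped Topology

theorem Real.sub_div_sqrt_le_two_mul_sqrt_sub {a b : ℝ} (hb : 0 ≤ b) (hba : b ≤ a) :
    (a - b) / √a ≤ 2 * (√a - √b) := by
  rcases hba.lt_or_eq with hlt | rfl
  · have ha : 0 < √a := Real.sqrt_pos.2 (hb.trans_lt hlt)
    have hsqrt : √b ≤ √a := Real.sqrt_le_sqrt hlt.le
    rw [div_le_iff₀ ha]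
    nlinarith [Real.sq_sqrt hb, Real.sq_sqrt (hb.trans hlt.le), Real.sqrt_nonneg b]
  · simp

theorem exists_weight_tendsto_atTop_summable_mul {f : ℕ → ℝ} (hf : ∀ n, 0 < f n)
    (hs : Summable f) :
    ∃ ω : ℕ → ℝ, (∀ n, 0 < ω n) ∧ Monotone ω ∧ Tendsto ω atTop atTop ∧
      Summable fun n => ω n * f n := by
  set t : ℕ → ℝ := fun n => ∑' i, f i - ∑ i ∈ range n, f i with ht
  have ht_pos : ∀ n, 0 < t n := fun n => by
    have htail := ((summable_nat_add_iff n).2 hs).tsum_pos (fun i => (hf _).le) 0 (hf _)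
    linarith [hs.sum_add_tsum_nat_add n]
  have ht_succ : ∀ n, t n - t (n + 1) = f n := fun n => by
    simp only [ht, sum_range_succ]; ring
  have ht_anti : Antitone t :=
    antitone_nat_of_succ_le fun n => by linarith [ht_succ n, hf n]
  have ht_zero : Tendsto t atTop (𝓝 0) := by
    rw [← sub_self (∑' i, f i)]
    exact tendsto_const_nhds.sub hs.tendsto_sum_tsum_nat
  refine ⟨fun n => (√(t n))⁻¹, fun n => inv_pos.2 (Real.sqrt_pos.2 (ht_pos n)),
    fun m n hmn => inv_anti₀ (Real.sqrt_pos.2 (ht_pos n)) (Real.sqrt_le_sqrt (ht_anti hmn)),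
    ?_, ?_⟩
  · refine tendsto_inv_nhdsGT_zero.comp (tendsto_nhdsWithin_iff.2 ⟨?_, ?_⟩)
    · simpa using ht_zero.sqrt
    · exact Eventually.of_forall fun n => Real.sqrt_pos.2 (ht_pos n)
  · have hbound : ∀ n, (√(t n))⁻¹ * f n ≤ 2 * (√(t n) - √(t (n + 1))) := fun n => by
      rw [inv_mul_eq_div, ← ht_succ n]
      exact Real.sub_div_sqrt_le_two_mul_sqrt_sub (ht_pos _).le (ht_anti n.le_succ)
    refine summable_of_sum_range_le (c := 2 * √(t 0))
      (fun n => mul_nonneg (inv_nonneg.2 (Real.sqrt_nonneg _)) (hf n).le) fun n => ?_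
    calc ∑ i ∈ range n, (√(t i))⁻¹ * f i
        ≤ ∑ i ∈ range n, 2 * (√(t i) - √(t (i + 1))) := sum_le_sum fun i _ => hbound i
      _ = 2 * (√(t 0) - √(t n)) := by rw [← mul_sum, sum_range_sub' (fun i => √(t i))]
      _ ≤ 2 * √(t 0) := by linarith [Real.sqrt_nonneg (t n)]

theorem exists_mem_Ico_sub_mul_le_mul_sum_div {r : ℕ → ℝ} {m n : ℕ} (hm : 0 < m) (hmn : m < n)
    (hr : ∀ k ∈ Ico m n, 0 ≤ r k) :
    ∃ k ∈ Ico m n, ((n : ℝ) - m) * r k ≤ n * ∑ i ∈ Ico m n, r i / i := by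
  obtain ⟨k, hk, hmin⟩ := (Ico m n).exists_min_image r (nonempty_Ico.2 hmn)
  refine ⟨k, hk, ?_⟩
  calc ((n : ℝ) - m) * r k = #(Ico m n) • r k := by
        rw [Nat.card_Ico, nsmul_eq_mul, Nat.cast_sub hmn.le]
    _ ≤ ∑ i ∈ Ico m n, r i := card_nsmul_le_sum _ _ _ hmin
    _ ≤ ∑ i ∈ Ico m n, n * (r i / i) := sum_le_sum fun i hi => by
        obtain ⟨hmi, hin⟩ := mem_Ico.1 hi
        have hi0 : (0 : ℝ) < i := by exact_mod_cast hm.trans_le hmi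
        rw [mul_div_assoc', le_div_iff₀ hi0, mul_comm]
        exact mul_le_mul_of_nonneg_right (Nat.cast_le.2 hin.le) (hr i hi)
    _ = n * ∑ i ∈ Ico m n, r i / i := (mul_sum _ _ _).symm

theorem summable_sum_Ico_of_strictMono {g : ℕ → ℝ} (hg : ∀ n, 0 ≤ g n) (hs : Summable g)
    {a : ℕ → ℕ} (ha : StrictMono a) :
    Summable fun j => ∑ i ∈ Ico (a j) (a (j + 1)), g i := by
  have hblocks : ∀ J, ∑ j ∈ range J, ∑ i ∈ Ico (a j) (a (j + 1)), g i =
      ∑ i ∈ Ico (a 0) (a J), g i := fun J => by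
    induction J with
    | zero => simp
    | succ J ih =>
      rw [sum_range_succ, ih, sum_Ico_consecutive _ (ha.monotone J.zero_le) (ha.monotone J.le_succ)]
  refine summable_of_sum_range_le (c := ∑' i, g i) (fun j => sum_nonneg fun i _ => hg i) fun J => ?_
  rw [hblocks]
  exact hs.sum_le_tsum _ fun i _ => hg i

theorem tendsto_succ_div_of_mem_Ico {a N : ℕ → ℕ} (ha : ∀ j, 0 < a j)
    (hN : ∀ j, N j ∈ Ico (a j) (a (j + 1)))
    (hlim : Tendsto (fun j => (a (j + 1) : ℝ) / a j) atTop (𝓝 1)) :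
    Tendsto (fun j => (N (j + 1) : ℝ) / N j) atTop (𝓝 1) := by
  have hlo : ∀ j, a j ≤ N j := fun j => (mem_Ico.1 (hN j)).1
  have hhi : ∀ j, N j < a (j + 1) := fun j => (mem_Ico.1 (hN j)).2
  have hpos : ∀ j, (0 : ℝ) < N j := fun j => by exact_mod_cast (ha j).trans_le (hlo j)
  have hlim2 : Tendsto (fun j => (a (j + 1 + 1) : ℝ) / a (j + 1) * ((a (j + 1) : ℝ) / a j))
      atTop (𝓝 1) := by
    simpa using (hlim.comp (tendsto_add_atTop_nat 1)).mul hlim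
  refine tendsto_of_tendsto_of_tendsto_of_le_of_le tendsto_const_nhds hlim2 (fun j => ?_)
    fun j => ?_
  · rw [le_div_iff₀ (hpos j), one_mul]
    exact_mod_cast (hhi j).le.trans (hlo (j + 1))
  · have ha1 : (0 : ℝ) < a (j + 1) := by exact_mod_cast ha (j + 1)
    rw [div_mul_div_cancel₀ ha1.ne']
    exact div_le_div₀ (Nat.cast_nonneg _) (Nat.cast_le.2 (hhi (j + 1)).le)
      (Nat.cast_pos.2 (ha j)) (Nat.cast_le.2 (hlo j))

def blockSeq (ω : ℕ → ℝ) : ℕ → ℕ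
  | 0 => 1
  | j + 1 => blockSeq ω j + ⌈(blockSeq ω j : ℝ) / ω (blockSeq ω j)⌉₊

namespace blockSeq

variable {ω : ℕ → ℝ}

theorem pos (j : ℕ) : 0 < blockSeq ω j := by
  induction j with
  | zero => exact one_pos
  | succ j ih => exact ih.trans_le (Nat.le_add_right _ _)

theorem lt_succ (hω : ∀ n, 0 < ω n) (j : ℕ) : blockSeq ω j < blockSeq ω (j + 1) :=
  Nat.lt_add_of_pos_right (Nat.ceil_pos.2 (div_pos (Nat.cast_pos.2 (pos j)) (hω _)))

theorem strictMono (hω : ∀ n, 0 < ω n) : StrictMono (blockSeq ω) :=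
  strictMono_nat_of_lt_succ (lt_succ hω)

theorem succ_le_mul_sub (hω : ∀ n, 0 < ω n) (j : ℕ) :
    (blockSeq ω (j + 1) : ℝ) ≤ (ω (blockSeq ω j) + 1) * (blockSeq ω (j + 1) - blockSeq ω j) := by
  set a := blockSeq ω j
  have hlen : (a : ℝ) / ω a ≤ ⌈(a : ℝ) / ω a⌉₊ := Nat.le_ceil _
  rw [div_le_iff₀ (hω a)] at hlen
  simp only [blockSeq, Nat.cast_add]
  linarith

theorem succ_lt (hω : ∀ n, 0 < ω n) (j : ℕ) :
    (blockSeq ω (j + 1) : ℝ) < blockSeq ω j * (1 + (ω (blockSeq ω j))⁻¹) + 1 := by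
  set a := blockSeq ω j
  have hlen : (⌈(a : ℝ) / ω a⌉₊ : ℝ) < a / ω a + 1 :=
    Nat.ceil_lt_add_one (div_nonneg (Nat.cast_nonneg _) (hω a).le)
  simp only [blockSeq, Nat.cast_add]
  rw [mul_add, mul_one, ← div_eq_mul_inv]
  linarith

theorem tendsto_succ_div (hω : ∀ n, 0 < ω n) (hω_top : Tendsto ω atTop atTop) :
    Tendsto (fun j => (blockSeq ω (j + 1) : ℝ) / blockSeq ω j) atTop (𝓝 1) := by
  have ha_top : Tendsto (fun j => (blockSeq ω j : ℝ)) atTop atTop :=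
    tendsto_natCast_atTop_atTop.comp (strictMono hω).tendsto_atTop
  have hupper : Tendsto (fun j => 1 + (ω (blockSeq ω j))⁻¹ + (blockSeq ω j : ℝ)⁻¹) atTop (𝓝 1) := by
    simpa using ((hω_top.comp (strictMono hω).tendsto_atTop).inv_tendsto_atTop.const_add 1).add
      ha_top.inv_tendsto_atTop
  refine tendsto_of_tendsto_of_tendsto_of_le_of_le tendsto_const_nhds hupper (fun j => ?_)
    fun j => ?_
  · have ha : (0 : ℝ) < blockSeq ω j := Nat.cast_pos.2 (pos j)
    rw [le_div_iff₀ ha, one_mul]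
    exact Nat.cast_le.2 (lt_succ hω j).le
  · have ha : (0 : ℝ) < blockSeq ω j := Nat.cast_pos.2 (pos j)
    rw [div_le_iff₀ ha, add_mul, inv_mul_cancel₀ ha.ne', mul_comm]
    exact (succ_lt hω j).le

end blockSeq

theorem exists_strictMono_summable_tendsto_div_of_weight {r : ℕ → ℝ} (hr : ∀ N, 1 ≤ N → 0 ≤ r N)
    {ω : ℕ → ℝ} (hω : ∀ n, 0 < ω n) (hω_mono : Monotone ω) (hω_top : Tendsto ω atTop atTop)
    (hsum : Summable fun N : ℕ => (ω N + 1) * (r N / N)) :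
    ∃ Nj : ℕ → ℕ, StrictMono Nj ∧ (∀ j, 1 ≤ Nj j) ∧ (Summable fun j => r (Nj j)) ∧
      Tendsto (fun j => (Nj (j + 1) : ℝ) / (Nj j : ℝ)) atTop (𝓝 1) := by
  set a := blockSeq ω
  have hr' : ∀ j, ∀ k ∈ Ico (a j) (a (j + 1)), 0 ≤ r k := fun j k hk =>
    hr k ((blockSeq.pos j).trans_le (mem_Ico.1 hk).1)
  choose Nj hNj_mem hNj_le using fun j =>
    exists_mem_Ico_sub_mul_le_mul_sum_div (blockSeq.pos j) (blockSeq.lt_succ hω j) (hr' j)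
  have hNj_pos : ∀ j, 1 ≤ Nj j := fun j => (blockSeq.pos j).trans_le (mem_Ico.1 (hNj_mem j)).1
  have hbound : ∀ j, r (Nj j) ≤ ∑ i ∈ Ico (a j) (a (j + 1)), (ω i + 1) * (r i / i) := fun j => by
    have hlen : (0 : ℝ) < a (j + 1) - a j := sub_pos.2 (Nat.cast_lt.2 (blockSeq.lt_succ hω j))
    have hS : 0 ≤ ∑ i ∈ Ico (a j) (a (j + 1)), r i / i :=
      sum_nonneg fun i hi => div_nonneg (hr' j i hi) (Nat.cast_nonneg _)
    calc r (Nj j) ≤ (ω (a j) + 1) * ∑ i ∈ Ico (a j) (a (j + 1)), r i / i := by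
          rw [← mul_le_mul_iff_right₀ hlen]
          calc ((a (j + 1) : ℝ) - a j) * r (Nj j)
              ≤ a (j + 1) * ∑ i ∈ Ico (a j) (a (j + 1)), r i / i := hNj_le j
            _ ≤ (ω (a j) + 1) * (a (j + 1) - a j) * ∑ i ∈ Ico (a j) (a (j + 1)), r i / i :=
                mul_le_mul_of_nonneg_right (blockSeq.succ_le_mul_sub hω j) hS
            _ = _ := by ring
      _ ≤ _ := by
          rw [mul_sum]
          exact sum_le_sum fun i hi => mul_le_mul_of_nonneg_right
            (by linarith [hω_mono (mem_Ico.1 hi).1]) (div_nonneg (hr' j i hi) (Nat.cast_nonneg _))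
  have hg : ∀ N, 0 ≤ (ω N + 1) * (r N / N) := fun N => by
    rcases N.eq_zero_or_pos with rfl | hN
    · simp
    · exact mul_nonneg (by linarith [hω N]) (div_nonneg (hr N hN) (Nat.cast_nonneg _))
  refine ⟨Nj, strictMono_nat_of_lt_succ fun j => ?_, hNj_pos, ?_, ?_⟩
  · exact (mem_Ico.1 (hNj_mem j)).2.trans_le (mem_Ico.1 (hNj_mem (j + 1))).1
  · exact (summable_sum_Ico_of_strictMono hg hsum (blockSeq.strictMono hω)).of_nonneg_of_le
      (fun j => hr _ (hNj_pos j)) hbound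
  · exact tendsto_succ_div_of_mem_Ico blockSeq.pos hNj_mem (blockSeq.tendsto_succ_div hω hω_top)

/-- If `(r_N)` is a sequence of positive reals with `Σ_{N=1}^∞ r_N/N < ∞`, then there is
a strictly increasing sequence of indices `N_j → ∞` with `Σ_j r_{N_j} < ∞` and
`N_{j+1}/N_j → 1`. -/
theorem stmt17 (r : ℕ → ℝ) (hr : ∀ N : ℕ, 1 ≤ N → 0 < r N)
    (hsum : Summable fun N : ℕ => r (N + 1) / (N + 1 : ℝ)) :
    ∃ Nj : ℕ → ℕ, StrictMono Nj ∧ (∀ j, 1 ≤ Nj j) ∧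
      (Summable fun j => r (Nj j)) ∧
      Tendsto (fun j => (Nj (j + 1) : ℝ) / (Nj j : ℝ)) atTop (𝓝 1) := by
  obtain ⟨ω, hω, hω_mono, hω_top, hω_sum⟩ := exists_weight_tendsto_atTop_summable_mul
    (fun n => div_pos (hr (n + 1) n.succ_pos) (by positivity)) hsum
  refine exists_strictMono_summable_tendsto_div_of_weight (fun N hN => (hr N hN).le)
    (ω := fun N => ω (N - 1)) (fun N => hω _) (hω_mono.comp fun _ _ h => Nat.sub_le_sub_right h 1)
    (hω_top.comp (tendsto_sub_atTop_nat 1)) ?_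
  rw [← summable_nat_add_iff 1]
  refine (hω_sum.add hsum).congr fun n => ?_
  simp only [Nat.add_sub_cancel, Nat.cast_add, Nat.cast_one]
  ring
end
end
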